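/- Fix n ≥ 1, an integer k with 1 ≤ k < n, θ ∈ ℝ, σ > 0, ξ > 0, η > 0 and a scaling factor α > 0. Let Z be a real random variable with Gaussian law N(θ, σ²ξ²/n), let S be independent of Z with density ρ_{n−k}, and let θ̃_H = Z·1(|Z| > σSξη) be the feasible hard-thresholding estimator. Then for every x ∈ ℝ, P(σ^{−1}α(θ̃_H − θ) ≤ x) = Φ(n^{1/2} x/(α ξ))·∫_0^∞ 1(|x/α + θ/σ| > ξ s η) ρ_{n−k}(s) ds + ∫_0^∞ Φ(n^{1/2}(−θ/(σξ) + s η))·1(0 ≤ x/α + θ/σ ≤ ξ s η) ρ_{n−k}(s) ds + ∫_0^∞ Φ(n^{1/2}(−θ/(σξ) − s η))·1(−ξ s η ≤ x/α + θ/σ < 0) ρ_{n−k}(s) ds. -/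

import Mathlib

open MeasureTheory ProbabilityTheory Filter Set
open scoped NNReal

/-- Standard normal cdf. -/
noncomputable def Phi (x : ℝ) : ℝ :=
  ∫ t in Iic x, (Real.sqrt (2 * Real.pi))⁻¹ * Real.exp (-t ^ 2 / 2)

/-- Standard normal pdf. -/
noncomputable def stdPhi (t : ℝ) : ℝ :=
  (Real.sqrt (2 * Real.pi))⁻¹ * Real.exp (-t ^ 2 / 2)

/-- Extension of `Phi` to the extended reals, with `PhiE ⊤ = 1` and `PhiE ⊥ = 0`. -/
noncomputable def PhiE (z : EReal) : ℝ :=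
  if z = ⊤ then 1 else if z = ⊥ then 0 else Phi z.toReal

/-- Density of `m^{-1/2}` times the square root of a chi-square with `m` degrees of freedom. -/
noncomputable def rho (m : ℕ) (s : ℝ) : ℝ :=
  if 0 < s then
    (2 : ℝ) ^ ((1 : ℝ) - (m : ℝ) / 2) * (Real.Gamma ((m : ℝ) / 2))⁻¹ * Real.sqrt m *
      ((m : ℝ) * s ^ 2) ^ (((m : ℝ) - 1) / 2) * Real.exp (-(m : ℝ) * s ^ 2 / 2)
  else 0

/-- Joint law of the least-squares coordinate `Z ~ N(θ, σ²ξ²/n)` and the independent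
variance-estimator ratio `S` with density `rho m`. -/
noncomputable def jointMeas (n m : ℕ) (ξ θ σ : ℝ) : Measure (ℝ × ℝ) :=
  (gaussianReal θ (Real.toNNReal (σ ^ 2 * ξ ^ 2 / n))).prod
    (volume.withDensity fun s => ENNReal.ofReal (rho m s))

/-- Feasible hard-thresholding estimator `Z · 1(|Z| > σSξη)`. -/
noncomputable def hardF (σ ξ η : ℝ) (p : ℝ × ℝ) : ℝ :=
  if σ * p.2 * ξ * η < |p.1| then p.1 else 0

/-- Feasible soft-thresholding estimator `sign(Z)(|Z| − σSξη)₊`. -/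
noncomputable def softF (σ ξ η : ℝ) (p : ℝ × ℝ) : ℝ :=
  Real.sign p.1 * max (|p.1| - σ * p.2 * ξ * η) 0

/-- Feasible adaptive soft-thresholding estimator `Z(1 − σ²S²ξ²η²/Z²)₊`. -/
noncomputable def adaptF (σ ξ η : ℝ) (p : ℝ × ℝ) : ℝ :=
  if p.1 = 0 then 0 else p.1 * max (1 - (σ * p.2 * ξ * η) ^ 2 / p.1 ^ 2) 0

/-!
Conditionally on `S = s`, the estimator is the hard-thresholding map `z ↦ z · 1(t < |z|)` with
threshold `t = σ s ξ η > 0` applied to the Gaussian `Z`, and `{z · 1(t < |z|) ≤ y}` is `{z ≤ y}`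
when `t < |y|`, `{z ≤ t}` when `0 ≤ y ≤ t`, and `{z < -t}` when `-t ≤ y < 0`. Each of these
has Gaussian probability a value of `Φ`; integrating the conditional probability against the
density `ρ_{n-k}` of `S` (Tonelli) gives the three terms.
-/

lemma Phi_eq_integral_gaussianPDFReal (y : ℝ) :
    Phi y = ∫ t in Iic y, gaussianPDFReal 0 1 t := by
  simp [Phi, gaussianPDFReal]

lemma Phi_nonneg (y : ℝ) : 0 ≤ Phi y := by
  rw [Phi_eq_integral_gaussianPDFReal]
  exact setIntegral_nonneg measurableSet_Iic fun t _ => gaussianPDFReal_nonneg _ _ _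

lemma Phi_le_one (y : ℝ) : Phi y ≤ 1 := by
  rw [Phi_eq_integral_gaussianPDFReal, ← integral_gaussianPDFReal_eq_one 0 one_ne_zero]
  exact setIntegral_le_integral (integrable_gaussianPDFReal 0 1)
    (Eventually.of_forall fun t => gaussianPDFReal_nonneg _ _ _)

lemma Phi_monotone : Monotone Phi := fun a b hab => by
  rw [Phi_eq_integral_gaussianPDFReal, Phi_eq_integral_gaussianPDFReal]
  exact setIntegral_mono_set (integrable_gaussianPDFReal 0 1).integrableOn
    (Eventually.of_forall fun t => gaussianPDFReal_nonneg _ _ _)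
    (Iic_subset_Iic.mpr hab).eventuallyLE

lemma gaussianReal_map_standardize (μ : ℝ) {v : ℝ≥0} (hv : v ≠ 0) :
    (gaussianReal μ v).map (fun x => (x - μ) / √v) = gaussianReal 0 1 := by
  rw [show (fun x => (x - μ) / √v) = (· / √(v : ℝ)) ∘ (· - μ) from rfl,
    ← Measure.map_map (by fun_prop) (by fun_prop), gaussianReal_map_sub_const,
    gaussianReal_map_div_const, sub_self, zero_div]
  congr
  ext
  simp [hv]

lemma gaussianReal_Iic (μ : ℝ) {v : ℝ≥0} (hv : v ≠ 0) (a : ℝ) :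
    gaussianReal μ v (Iic a) = ENNReal.ofReal (Phi ((a - μ) / √v)) := by
  have hsd : 0 < √(v : ℝ) := Real.sqrt_pos.mpr (NNReal.coe_pos.mpr (pos_iff_ne_zero.mpr hv))
  have hpre : (fun x => (x - μ) / √v) ⁻¹' Iic ((a - μ) / √v) = Iic a := by
    ext z
    simp [div_le_div_iff_of_pos_right hsd]
  rw [← hpre, ← Measure.map_apply (by fun_prop) measurableSet_Iic,
    gaussianReal_map_standardize μ hv, gaussianReal_apply_eq_integral 0 one_ne_zero,
    Phi_eq_integral_gaussianPDFReal]

lemma gaussianReal_Iio (μ : ℝ) {v : ℝ≥0} (hv : v ≠ 0) (a : ℝ) :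
    gaussianReal μ v (Iio a) = ENNReal.ofReal (Phi ((a - μ) / √v)) := by
  rw [measure_congr (Iio_ae_eq_Iic' (gaussianReal_absolutelyContinuous μ hv
    (measure_singleton a))), gaussianReal_Iic μ hv]

lemma rho_nonneg (m : ℕ) (s : ℝ) : 0 ≤ rho m s := by
  have := Real.Gamma_nonneg_of_nonneg (s := (m : ℝ) / 2) (by positivity)
  unfold rho
  split_ifs <;> positivity

lemma measurable_rho (m : ℕ) : Measurable (rho m) :=
  Measurable.ite measurableSet_Ioi (by fun_prop) measurable_const

lemma rho_eq_zero_of_nonpos (m : ℕ) {s : ℝ} (hs : s ≤ 0) : rho m s = 0 :=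
  if_neg hs.not_gt

lemma integrableOn_rho (m : ℕ) : IntegrableOn (rho m) (Ioi 0) := by
  rcases m.eq_zero_or_pos with rfl | hm
  · rw [show rho 0 = 0 by ext; simp [rho]]
    exact integrableOn_zero
  have hm' : (0 : ℝ) < m := by exact_mod_cast hm
  have hint := (integrableOn_rpow_mul_exp_neg_mul_sq (half_pos hm')
    (by linarith : (-1 : ℝ) < m - 1)).const_mul ((2 : ℝ) ^ ((1 : ℝ) - m / 2) *
      (Real.Gamma (m / 2))⁻¹ * √m * (m : ℝ) ^ (((m : ℝ) - 1) / 2))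
  refine IntegrableOn.congr_fun hint (fun s (hs : 0 < s) => ?_) measurableSet_Ioi
  rw [rho, if_pos hs, Real.mul_rpow hm'.le (by positivity), ← Real.rpow_natCast s 2,
    ← Real.rpow_mul hs.le]
  ring_nf

lemma setOf_hardThreshold_le {t : ℝ} (ht : 0 ≤ t) (y : ℝ) :
    {z : ℝ | (if t < |z| then z else 0) ≤ y} =
      if t < |y| then Iic y else if 0 ≤ y then Iic t else Iio (-t) := by
  ext z
  simp only [mem_ofPred_eq]
  split_ifs <;>
    simp only [mem_Iic, mem_Iio] <;> grind [abs_lt, lt_abs, abs_le, le_abs]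

lemma gaussianReal_hardThreshold_le (μ : ℝ) {v : ℝ≥0} (hv : v ≠ 0) {t : ℝ} (ht : 0 ≤ t)
    (y : ℝ) :
    gaussianReal μ v {z | (if t < |z| then z else 0) ≤ y} =
      ENNReal.ofReal (if t < |y| then Phi ((y - μ) / √v)
        else if 0 ≤ y then Phi ((t - μ) / √v) else Phi ((-t - μ) / √v)) := by
  rw [setOf_hardThreshold_le ht]
  split_ifs
  · exact gaussianReal_Iic μ hv y
  · exact gaussianReal_Iic μ hv t
  · exact gaussianReal_Iio μ hv (-t)

lemma ite_abs_lt_eq_add_indicators (T c a b d : ℝ) :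
    (if T < |c| then a else if 0 ≤ c then b else d) =
      a * (if T < |c| then 1 else 0) + b * (if 0 ≤ c ∧ c ≤ T then 1 else 0)
        + d * (if -T ≤ c ∧ c < 0 then 1 else 0) := by
  split_ifs <;> grind [abs_lt, lt_abs, abs_le, le_abs]

lemma jointMeas_apply (n m : ℕ) (ξ θ σ : ℝ) {A : Set (ℝ × ℝ)} (hA : MeasurableSet A) :
    jointMeas n m ξ θ σ A = ∫⁻ s in Ioi 0, ENNReal.ofReal (rho m s) *
      gaussianReal θ (σ ^ 2 * ξ ^ 2 / n).toNNReal ((fun z => (z, s)) ⁻¹' A) := by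
  rw [jointMeas, Measure.prod_apply_symm hA, lintegral_withDensity_eq_lintegral_mul _
    (measurable_rho m).ennreal_ofReal (measurable_measure_prodMk_right hA)]
  refine (setLIntegral_eq_of_support_subset fun s hs => ?_).symm
  by_contra hs'
  simp [rho_eq_zero_of_nonpos m (not_lt.mp hs')] at hs

lemma measurable_hardF (σ ξ η : ℝ) : Measurable (hardF σ ξ η) :=
  Measurable.ite (measurableSet_lt (by fun_prop) (by fun_prop)) (by fun_prop) (by fun_prop)

lemma gaussianReal_preimage_hardF_le {n : ℕ} (hn : 0 < n) {σ ξ η α : ℝ} (hσ : 0 < σ)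
    (hξ : 0 < ξ) (hη : 0 < η) (hα : 0 < α) (θ x : ℝ) {s : ℝ} (hs : 0 < s) :
    gaussianReal θ (σ ^ 2 * ξ ^ 2 / n).toNNReal
        ((fun z => (z, s)) ⁻¹' {p : ℝ × ℝ | σ⁻¹ * α * (hardF σ ξ η p - θ) ≤ x}) =
      ENNReal.ofReal (Phi (√n * x / (α * ξ)) * (if ξ * s * η < |x / α + θ / σ| then 1 else 0)
        + Phi (√n * (-θ / (σ * ξ) + s * η))
          * (if 0 ≤ x / α + θ / σ ∧ x / α + θ / σ ≤ ξ * s * η then 1 else 0)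
        + Phi (√n * (-θ / (σ * ξ) - s * η))
          * (if -(ξ * s * η) ≤ x / α + θ / σ ∧ x / α + θ / σ < 0 then 1 else 0)) := by
  set c := x / α + θ / σ
  have hn' : (0 : ℝ) < n := by exact_mod_cast hn
  have hv : (σ ^ 2 * ξ ^ 2 / n).toNNReal ≠ 0 := by positivity
  have hsqrt : √(σ ^ 2 * ξ ^ 2 / n).toNNReal = σ * ξ / √n := by
    rw [Real.coe_toNNReal _ (by positivity), Real.sqrt_div' _ hn'.le, ← mul_pow,
      Real.sqrt_sq (by positivity)]
  have hslice : (fun z => (z, s)) ⁻¹' {p : ℝ × ℝ | σ⁻¹ * α * (hardF σ ξ η p - θ) ≤ x} =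
      {z | (if σ * (ξ * s * η) < |z| then z else 0) ≤ σ * c} := by
    ext z
    simp only [mem_preimage, mem_ofPred_eq, hardF, c]
    rw [show σ * s * ξ * η = σ * (ξ * s * η) by ring, mul_assoc, inv_mul_le_iff₀ hσ,
      ← le_div_iff₀' hα, sub_le_iff_le_add]
    field_simp
  have hcond : σ * (ξ * s * η) < |σ * c| ↔ ξ * s * η < |c| := by
    rw [abs_mul, abs_of_pos hσ, mul_lt_mul_iff_right₀ hσ]
  have harg₁ : (σ * c - θ) / (σ * ξ / √n) = √n * x / (α * ξ) := by
    simp only [c]; field_simp; ring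
  have harg₂ : (σ * (ξ * s * η) - θ) / (σ * ξ / √n) = √n * (-θ / (σ * ξ) + s * η) := by
    field_simp; ring
  have harg₃ : (-(σ * (ξ * s * η)) - θ) / (σ * ξ / √n) = √n * (-θ / (σ * ξ) - s * η) := by
    field_simp; ring
  rw [hslice, gaussianReal_hardThreshold_le θ hv (by positivity), hsqrt]
  simp only [hcond, mul_nonneg_iff_of_pos_left hσ, harg₁, harg₂, harg₃]
  rw [ite_abs_lt_eq_add_indicators]

lemma ite_one_zero_mem_Icc (P : Prop) [Decidable P] :
    (if P then (1 : ℝ) else 0) ∈ Icc 0 1 := by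
  split_ifs <;> simp

lemma integrableOn_mul_rho (m : ℕ) {g : ℝ → ℝ} (hg : Measurable g)
    (hg01 : ∀ s, g s ∈ Icc 0 1) : IntegrableOn (fun s => g s * rho m s) (Ioi 0) :=
  (integrableOn_rho m).bdd_mul hg.aestronglyMeasurable
    (ae_of_all _ fun s => by rw [Real.norm_of_nonneg (hg01 s).1]; exact (hg01 s).2)

lemma integrableOn_ite_mul_rho (m : ℕ) {P : ℝ → Prop} [DecidablePred P]
    (hP : MeasurableSet {s | P s}) :
    IntegrableOn (fun s => (if P s then 1 else 0) * rho m s) (Ioi 0) :=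
  integrableOn_mul_rho m (Measurable.ite hP measurable_const measurable_const)
    fun _ => ite_one_zero_mem_Icc _

lemma integrableOn_Phi_mul_ite_mul_rho (m : ℕ) {a : ℝ → ℝ} (ha : Measurable a) {P : ℝ → Prop}
    [DecidablePred P] (hP : MeasurableSet {s | P s}) :
    IntegrableOn (fun s => Phi (a s) * (if P s then 1 else 0) * rho m s) (Ioi 0) :=
  integrableOn_mul_rho m
    ((Phi_monotone.measurable.comp ha).mul (Measurable.ite hP measurable_const measurable_const))
    fun _ => ⟨mul_nonneg (Phi_nonneg _) (ite_one_zero_mem_Icc _).1,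
      mul_le_one₀ (Phi_le_one _) (ite_one_zero_mem_Icc _).1 (ite_one_zero_mem_Icc _).2⟩

theorem stmt_14_general (n k : ℕ) (hkn : k < n) (θ σ ξ η α : ℝ)
    (hσ : 0 < σ) (hξ : 0 < ξ) (hη : 0 < η) (hα : 0 < α) (x : ℝ) :
    (jointMeas n (n - k) ξ θ σ
        {p : ℝ × ℝ | σ⁻¹ * α * (hardF σ ξ η p - θ) ≤ x}).toReal =
      Phi (Real.sqrt n * x / (α * ξ)) *
          (∫ s in Ioi (0 : ℝ),
            (if ξ * s * η < |x / α + θ / σ| then 1 else 0) * rho (n - k) s)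
        + (∫ s in Ioi (0 : ℝ), Phi (Real.sqrt n * (-θ / (σ * ξ) + s * η)) *
            (if 0 ≤ x / α + θ / σ ∧ x / α + θ / σ ≤ ξ * s * η then 1 else 0) * rho (n - k) s)
        + (∫ s in Ioi (0 : ℝ), Phi (Real.sqrt n * (-θ / (σ * ξ) - s * η)) *
            (if -(ξ * s * η) ≤ x / α + θ / σ ∧ x / α + θ / σ < 0 then 1 else 0)
              * rho (n - k) s) := by
  set c := x / α + θ / σ
  have hint₁ := integrableOn_ite_mul_rho (n - k) (P := fun s => ξ * s * η < |c|)
    (by measurability)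
  have hint₂ := integrableOn_Phi_mul_ite_mul_rho (n - k)
    (a := fun s => √n * (-θ / (σ * ξ) + s * η)) (by fun_prop)
    (P := fun s => 0 ≤ c ∧ c ≤ ξ * s * η) (by measurability)
  have hint₃ := integrableOn_Phi_mul_ite_mul_rho (n - k)
    (a := fun s => √n * (-θ / (σ * ξ) - s * η)) (by fun_prop)
    (P := fun s => -(ξ * s * η) ≤ c ∧ c < 0) (by measurability)
  have hint₁₂ := (hint₁.const_mul (Phi (√n * x / (α * ξ)))).add hint₂
  rw [← integral_const_mul, ← integral_add (hint₁.const_mul _) hint₂, ← integral_add ?_ hint₃,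
    integral_eq_lintegral_of_nonneg_ae ?_ ?_, jointMeas_apply _ _ _ _ _
      (measurableSet_le (((measurable_hardF σ ξ η).sub_const θ).const_mul _) measurable_const)]
  · congr 1
    refine setLIntegral_congr_fun measurableSet_Ioi fun s (hs : 0 < s) => ?_
    rw [gaussianReal_preimage_hardF_le (k.zero_le.trans_lt hkn) hσ hξ hη hα θ x hs,
      ← ENNReal.ofReal_mul (rho_nonneg _ _)]
    congr 1
    ring
  · refine ae_of_all _ fun s => ?_
    have := rho_nonneg (n - k) s
    have := Phi_nonneg (√n * x / (α * ξ))
    have := Phi_nonneg (√n * (-θ / (σ * ξ) + s * η))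
    have := Phi_nonneg (√n * (-θ / (σ * ξ) - s * η))
    positivity
  · exact (hint₁₂.add hint₃).aestronglyMeasurable
  · exact hint₁₂

/-- finite-sample cdf of the scaled and centered feasible
hard-thresholding estimator. -/
theorem stmt_14 (n k : ℕ) (hk : 1 ≤ k) (hkn : k < n) (θ σ ξ η α : ℝ)
    (hσ : 0 < σ) (hξ : 0 < ξ) (hη : 0 < η) (hα : 0 < α) (x : ℝ) :
    (jointMeas n (n - k) ξ θ σ
        {p : ℝ × ℝ | σ⁻¹ * α * (hardF σ ξ η p - θ) ≤ x}).toReal =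
      Phi (Real.sqrt n * x / (α * ξ)) *
          (∫ s in Ioi (0 : ℝ),
            (if ξ * s * η < |x / α + θ / σ| then 1 else 0) * rho (n - k) s)
        + (∫ s in Ioi (0 : ℝ), Phi (Real.sqrt n * (-θ / (σ * ξ) + s * η)) *
            (if 0 ≤ x / α + θ / σ ∧ x / α + θ / σ ≤ ξ * s * η then 1 else 0) * rho (n - k) s)
        + (∫ s in Ioi (0 : ℝ), Phi (Real.sqrt n * (-θ / (σ * ξ) - s * η)) *
            (if -(ξ * s * η) ≤ x / α + θ / σ ∧ x / α + θ / σ < 0 then 1 else 0)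
              * rho (n - k) s) :=
  stmt_14_general n k hkn θ σ ξ η α hσ hξ hη hα x
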